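/- Let a : ℕ → α be a sequence in the class 𝒞. Then for every k ∈ ℕ, the prefix of a of length 4k admits an optimal palindromic decomposition (i.e. into exactly P_a(4k) palindromes) in which the length of every palindromic factor is divisible by 4. -/

import Mathlib

/-- Membership in the class 𝒞: there exist a letter `c`, bijections `f n`,
and words `w n` with `w 0 = [c]`,
`w (n+1) = w n ++ f n (w n) ++ f n (w n) ++ w n`, `f n (w n) ≠ w n`,
and `w n` is the prefix of `a` of length `4 ^ n`. -/
def InC {α : Type*} (a : ℕ → α) : Prop :=
  ∃ (c : α) (f : ℕ → α ≃ α) (w : ℕ → List α),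
    w 0 = [c] ∧
    (∀ n, w (n + 1) = w n ++ (w n).map (f n) ++ (w n).map (f n) ++ w n) ∧
    (∀ n, (w n).map (f n) ≠ w n) ∧
    (∀ n, w n = (List.range (4 ^ n)).map a)

/-- The factor `a(x) a(x+1) ⋯ a(x+y-1)` of the sequence `a`. -/
def factor {α : Type*} (a : ℕ → α) (x y : ℕ) : List α :=
  (List.range y).map (fun i => a (x + i))

/-- The prefix of `a` of length `n`. -/
def prefixWord {α : Type*} (a : ℕ → α) (n : ℕ) : List α :=
  factor a 0 n

/-- The palindromic length of a finite word: the least number of palindromes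
whose concatenation is the word (0 for the empty word). -/
noncomputable def palLen {α : Type*} (w : List α) : ℕ :=
  sInf {k | ∃ ps : List (List α),
    ps.length = k ∧ (∀ p ∈ ps, p.Palindrome) ∧ ps.flatten = w}

/-- `P a n` is the palindromic length of the prefix of `a` of length `n`. -/
noncomputable def P {α : Type*} (a : ℕ → α) (n : ℕ) : ℕ :=
  palLen (prefixWord a n)

/-- The factor of length `y` at position `x` is embedded into the center of the
factor of length `4 * r` at position `4 * z`. -/
def EmbedCenter (x y z r : ℕ) : Prop :=
  4 * z ≤ x ∧ x + y ≤ 4 * z + 4 * r ∧ x - 4 * z = (4 * z + 4 * r) - (x + y)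

/-- The Thue–Morse sequence: `true` iff the number of ones in the binary
expansion is odd. -/
def thueMorse (n : ℕ) : Bool :=
  (Nat.digits 2 n).count 1 % 2 == 1

/-!
A sequence of 𝒞 is a concatenation of blocks `x y y x` with `x ≠ y`: the quarters of `w (n+1)`
are letterwise images of `w n` under bijections, and `w 1 = c f₀(c) f₀(c) c`. In such a sequence
every even palindrome is centred at an even position and no odd palindrome is longer than 3, so an
even palindrome stays a palindrome when both its ends are moved, symmetrically about its centre, to
a nearby multiple of 4. Rounding the cuts of an optimal decomposition in this way, from left to
right, gives palindromes of lengths divisible by 4. Occasionally a block has to be split off as an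
extra factor; this is paid for by the potential `debt`, so the number of factors does not grow.
-/

section

variable {α : Type*} {a : ℕ → α} {x b A ℓ : ℕ}

theorem factor_add (a : ℕ → α) (x m n : ℕ) :
    factor a x (m + n) = factor a x m ++ factor a (x + m) n := by
  simp only [factor, List.range_add, List.map_append, List.map_map]
  congr 1
  exact List.map_congr_left fun i _ => by simp [add_assoc]

theorem length_factor (a : ℕ → α) (x ℓ : ℕ) : (factor a x ℓ).length = ℓ := by
  simp [factor]

theorem eq_factor_of_append_eq_factor {u v : List α} (h : u ++ v = factor a x ℓ) :
    u = factor a x u.length ∧ v = factor a (x + u.length) v.length ∧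
      ℓ = u.length + v.length := by
  have hℓ : ℓ = u.length + v.length := by
    rw [← length_factor a x ℓ, ← h, List.length_append]
  rw [hℓ, factor_add] at h
  exact ⟨(List.append_inj h (length_factor ..).symm).1,
    (List.append_inj h (length_factor ..).symm).2, hℓ⟩

theorem apply_add_eq_of_factor_eq_map {g : α → α} {n j : ℕ}
    (h : factor a x n = (factor a 0 n).map g) (hj : j < n) : a (x + j) = g (a j) := by
  have := congrArg (·[j]?) h
  simpa [factor, hj] using this

def PalAt (a : ℕ → α) (x ℓ : ℕ) : Prop :=
  ∀ i j, i + j + 1 = ℓ → a (x + i) = a (x + j)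

theorem palindrome_factor_iff : (factor a x ℓ).Palindrome ↔ PalAt a x ℓ := by
  rw [List.Palindrome.iff_reverse_eq, List.ext_getElem_iff]
  simp only [List.length_reverse, List.getElem_reverse, factor, List.length_map,
    List.length_range, List.getElem_map, List.getElem_range, true_and]
  constructor
  · intro h i j hij
    simpa [show ℓ - 1 - i = j by omega] using (h i (by omega) (by omega)).symm
  · intro h i hi _
    exact h _ _ (by omega)

theorem PalAt.shrink {d m : ℕ} (hp : PalAt a x (m + 2 * d)) : PalAt a (x + d) m :=
  fun i j hij => by simpa only [add_assoc] using hp (d + i) (d + j) (by omega)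

theorem PalAt.extend {m : ℕ} (hp : PalAt a (x + 1) m) (hx : a x = a (x + m + 1)) :
    PalAt a x (m + 2) := by
  intro i j hij
  rcases i with _ | i <;> rcases j with _ | j
  · omega
  · simpa [show j = m by omega, add_assoc] using hx
  · simpa [show i = m by omega, add_assoc] using hx.symm
  · simpa only [add_assoc, add_comm 1] using hp i j (by omega)

structure IsBlock (a : ℕ → α) (i : ℕ) : Prop where
  three_eq_zero : a (4 * i + 3) = a (4 * i)
  two_eq_one : a (4 * i + 2) = a (4 * i + 1)
  zero_ne_one : a (4 * i) ≠ a (4 * i + 1)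

theorem IsBlock.of_map {g : α → α} (hg : g.Injective) {i i' : ℕ} (h : IsBlock a i')
    (hmap : ∀ r < 4, a (4 * i + r) = g (a (4 * i' + r))) : IsBlock a i := by
  have h0 := hmap 0 (by norm_num)
  simp only [add_zero] at h0
  exact ⟨by rw [hmap 3 (by norm_num), h0, h.three_eq_zero],
    by rw [hmap 2 (by norm_num), hmap 1 (by norm_num), h.two_eq_one],
    by rw [h0, hmap 1 (by norm_num)]; exact hg.ne h.zero_ne_one⟩

def IsBlockSeq (a : ℕ → α) : Prop := ∀ i, IsBlock a i

namespace IsBlockSeq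

theorem mod_four_of_apply_eq_succ (ha : IsBlockSeq a) {m : ℕ} (hm : a m = a (m + 1)) :
    m % 4 = 1 ∨ m % 4 = 3 := by
  obtain ⟨i, rfl | rfl | rfl | rfl⟩ :
      ∃ i, m = 4 * i ∨ m = 4 * i + 1 ∨ m = 4 * i + 2 ∨ m = 4 * i + 3 := ⟨m / 4, by omega⟩
  · exact absurd hm (ha i).zero_ne_one
  · omega
  · change a (4 * i + 2) = a (4 * i + 3) at hm
    rw [(ha i).two_eq_one, (ha i).three_eq_zero] at hm
    exact absurd hm.symm (ha i).zero_ne_one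
  · omega

theorem two_dvd_center (ha : IsBlockSeq a) {h : ℕ} (hp : PalAt a b (2 * h)) (hh : 1 ≤ h) :
    2 ∣ b + h := by
  obtain ⟨m, hm⟩ : ∃ m, b + h = m + 1 := ⟨b + h - 1, by omega⟩
  have := hp (h - 1) h (by omega)
  rw [show b + (h - 1) = m by omega, hm] at this
  have := ha.mod_four_of_apply_eq_succ this
  omega

theorem not_palAt_odd (ha : IsBlockSeq a) {h : ℕ} (hh : 2 ≤ h) : ¬ PalAt a b (2 * h + 1) := by
  intro hp
  obtain ⟨c, hc⟩ : ∃ c, b + h = c + 2 := ⟨b + h - 2, by omega⟩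
  have h1 : a (c + 1) = a (c + 3) := by
    simpa only [show b + (h - 1) = c + 1 by omega, show b + (h + 1) = c + 3 by omega]
      using hp (h - 1) (h + 1) (by omega)
  have h2 : a c = a (c + 4) := by
    simpa only [show b + (h - 2) = c by omega, show b + (h + 2) = c + 4 by omega]
      using hp (h - 2) (h + 2) (by omega)
  obtain ⟨i, rfl | rfl | rfl | rfl⟩ :
      ∃ i, c = 4 * i ∨ c = 4 * i + 1 ∨ c = 4 * i + 2 ∨ c = 4 * i + 3 := ⟨c / 4, by omega⟩
  -- in each residue class the two mirror equalities force `x = y` in one block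
  all_goals
    obtain ⟨h3, h21, hne⟩ := ha i
    obtain ⟨h3', h21', hne'⟩ := ha (i + 1)
    ring_nf at h1 h2 h3 h21 hne h3' h21' hne'
    grind

theorem palAt_block (ha : IsBlockSeq a) (q : ℕ) : PalAt a (4 * q) 4 := by
  have h : PalAt a (4 * q + 1) 2 := fun i j hij => by
    obtain ⟨rfl, rfl⟩ | ⟨rfl, rfl⟩ : i = 0 ∧ j = 1 ∨ i = 1 ∧ j = 0 := by omega
    exacts [(ha q).two_eq_one.symm, (ha q).two_eq_one]
  exact h.extend (ha q).three_eq_zero.symm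

theorem palAt_extend_one (ha : IsBlockSeq a) {q s : ℕ} (hs : 1 ≤ s)
    (hp : PalAt a (4 * q + 1) (4 * s + 2)) : PalAt a (4 * q) (4 * s + 4) := by
  refine hp.extend ?_
  have hmirror := hp 2 (4 * s - 1) (by omega)
  rw [show 4 * q + 1 + (4 * s - 1) = 4 * (q + s) by omega] at hmirror
  rw [show 4 * q + (4 * s + 2) + 1 = 4 * (q + s) + 3 by ring, (ha (q + s)).three_eq_zero,
    ← hmirror, ← (ha q).three_eq_zero]

theorem palAt_extend_two (ha : IsBlockSeq a) {q s : ℕ} (hs : 1 ≤ s)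
    (hp : PalAt a (4 * q + 2) (4 * s)) : PalAt a (4 * q) (4 * s + 4) := by
  refine ha.palAt_extend_one hs (hp.extend ?_)
  have hmirror := hp 0 (4 * s - 1) (by omega)
  rw [add_zero, show 4 * q + 2 + (4 * s - 1) = 4 * (q + s) + 1 by omega] at hmirror
  rw [show 4 * q + 1 + 4 * s + 1 = 4 * (q + s) + 2 by ring, (ha (q + s)).two_eq_one,
    ← hmirror, (ha q).two_eq_one]

theorem palAt_recenter (ha : IsBlockSeq a) {h : ℕ} (hp : PalAt a b (2 * h)) (hh : 2 ≤ h)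
    (hA : 4 ∣ A) (hAb : b ≤ A + 2) (hAc : A ≤ b + h) : PalAt a A (2 * (b + h - A)) := by
  have hc := ha.two_dvd_center hp (by omega)
  obtain ⟨q, rfl⟩ := hA
  rcases le_or_gt b (4 * q) with hb | hb
  · simpa [show b + (4 * q - b) = 4 * q by omega] using
      (show PalAt a b (2 * (b + h - 4 * q) + 2 * (4 * q - b)) by
        rwa [show 2 * (b + h - 4 * q) + 2 * (4 * q - b) = 2 * h by omega]).shrink
  · obtain ⟨s, hs⟩ : ∃ s, b + h - 4 * q = 2 * s + 2 := ⟨(b + h - 4 * q) / 2 - 1, by omega⟩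
    rw [hs, show 2 * (2 * s + 2) = 4 * s + 4 by ring]
    rcases (by omega : b = 4 * q + 1 ∨ b = 4 * q + 2) with rfl | rfl
    · exact ha.palAt_extend_one (by omega) (by rwa [show 4 * s + 2 = 2 * h by omega])
    · exact ha.palAt_extend_two (by omega) (by rwa [show 4 * s = 2 * h by omega])

end IsBlockSeq

theorem apply_quarters_of_rec {f : ℕ → α ≃ α} {w : ℕ → List α}
    (hrec : ∀ n, w (n + 1) = w n ++ (w n).map (f n) ++ (w n).map (f n) ++ w n)
    (hwp : ∀ n, w n = (List.range (4 ^ n)).map a) {n j : ℕ} (hj : j < 4 ^ n) :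
    a (4 ^ n + j) = f n (a j) ∧ a (2 * 4 ^ n + j) = f n (a j) ∧ a (3 * 4 ^ n + j) = a j := by
  have hw : ∀ n, w n = factor a 0 (4 ^ n) := fun n => by simp [hwp, factor]
  have hsplit := hrec n
  rw [hw, hw, show 4 ^ (n + 1) = 4 ^ n + 4 ^ n + 4 ^ n + 4 ^ n by ring, factor_add, factor_add,
    factor_add, zero_add] at hsplit
  obtain ⟨h012, h3⟩ := List.append_inj hsplit (by simp [length_factor])
  obtain ⟨h01, h2⟩ := List.append_inj h012 (by simp [length_factor])
  obtain ⟨-, h1⟩ := List.append_inj h01 (by simp [length_factor])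
  refine ⟨apply_add_eq_of_factor_eq_map h1 hj, ?_, ?_⟩
  · exact apply_add_eq_of_factor_eq_map (g := f n) (by rw [← h2]; ring_nf) hj
  · exact apply_add_eq_of_factor_eq_map (g := id) (by rw [List.map_id, ← h3]; ring_nf) hj

theorem InC.isBlockSeq (hC : InC a) : IsBlockSeq a := by
  obtain ⟨_, f, w, -, hrec, hfne, hwp⟩ := hC
  have base : IsBlock a 0 := by
    obtain ⟨h1, h2, h3⟩ := apply_quarters_of_rec hrec hwp (n := 0) (j := 0) (by norm_num)
    have hf : f 0 (a 0) ≠ a 0 := by simpa [hwp] using hfne 0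
    simp only [pow_zero, mul_one, add_zero] at h1 h2 h3
    refine ⟨?_, ?_, ?_⟩ <;> simp only [mul_zero, zero_add]
    exacts [h3, by rw [h2, h1], by rw [h1]; exact hf.symm]
  suffices h : ∀ n, ∀ i < 4 ^ n, IsBlock a i from
    fun i => h i i (Nat.lt_pow_self (by norm_num))
  intro n
  induction n with
  | zero =>
    intro i hi
    obtain rfl : i = 0 := by simpa using hi
    exact base
  | succ n ih =>
    intro i hi
    obtain ⟨t, i', ht, hi', rfl⟩ : ∃ t i', t < 4 ∧ i' < 4 ^ n ∧ i = t * 4 ^ n + i' :=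
      ⟨i / 4 ^ n, i % 4 ^ n, by rw [pow_succ] at hi; exact Nat.div_lt_of_lt_mul (by linarith),
        Nat.mod_lt _ (by positivity), (Nat.div_add_mod' i _).symm⟩
    have hq := fun r (hr : r < 4) => apply_quarters_of_rec hrec hwp (n := n + 1)
      (j := 4 * i' + r) (by rw [pow_succ]; omega)
    have hpos : 4 * (t * 4 ^ n + i') = t * 4 ^ (n + 1) + 4 * i' := by ring
    interval_cases t
    · simpa using ih i' hi'
    · exact (ih i' hi').of_map (f (n + 1)).injective fun r hr => by
        rw [hpos, one_mul, add_assoc]; exact (hq r hr).1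
    · exact (ih i' hi').of_map (f (n + 1)).injective fun r hr => by
        rw [hpos, add_assoc]; exact (hq r hr).2.1
    · exact (ih i' hi').of_map Function.injective_id fun r hr => by
        rw [hpos, add_assoc]; exact (hq r hr).2.2

theorem palLen_le {w : List α} {ps : List (List α)} (hps : ∀ p ∈ ps, p.Palindrome)
    (h : ps.flatten = w) : palLen w ≤ ps.length :=
  Nat.sInf_le ⟨ps, rfl, hps, h⟩

theorem exists_length_eq_palLen (w : List α) :
    ∃ ps : List (List α), ps.length = palLen w ∧ (∀ p ∈ ps, p.Palindrome) ∧ ps.flatten = w :=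
  Nat.sInf_mem (s := {k | ∃ ps : List (List α),
    ps.length = k ∧ (∀ p ∈ ps, p.Palindrome) ∧ ps.flatten = w})
    ⟨_, w.map ([·]), rfl, by simpa using fun x _ => List.Palindrome.singleton x,
      by induction w <;> simp [*]⟩

def AlignedPalCover (a : ℕ → α) (x ℓ n : ℕ) : Prop :=
  ∃ ps : List (List α), ps.flatten = factor a x ℓ ∧ ps.length ≤ n ∧
    ∀ p ∈ ps, p.Palindrome ∧ 4 ∣ p.length

namespace AlignedPalCover

theorem zero (a : ℕ → α) (x : ℕ) : AlignedPalCover a x 0 0 :=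
  ⟨[], by simp [factor], le_rfl, by simp⟩

theorem single (hp : PalAt a x ℓ) (h4 : 4 ∣ ℓ) : AlignedPalCover a x ℓ 1 :=
  ⟨[factor a x ℓ], by simp, le_rfl, by
    simpa [length_factor, palindrome_factor_iff] using ⟨hp, h4⟩⟩

theorem append {ℓ' n n' : ℕ} (h : AlignedPalCover a x ℓ n)
    (h' : AlignedPalCover a (x + ℓ) ℓ' n') : AlignedPalCover a x (ℓ + ℓ') (n + n') := by
  obtain ⟨ps, hflat, hlen, hps⟩ := h
  obtain ⟨ps', hflat', hlen', hps'⟩ := h'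
  refine ⟨ps ++ ps', by rw [List.flatten_append, hflat, hflat', factor_add], ?_, ?_⟩
  · rw [List.length_append]; omega
  · intro p hp
    exact (List.mem_append.mp hp).elim (hps p) (hps' p)

end AlignedPalCover

def IsRounding (A b : ℕ) : Prop := 4 ∣ A ∧ A ≤ b + 2 ∧ b ≤ A + 3

/-- A cut `b` rounded to `A` owes one factor when `b ≡ 2 [MOD 4]`, or `b ≡ 3` rounded down: from
there a later palindrome may need the block `[A, A + 4)` as an extra aligned factor. -/
def debt (b A : ℕ) : ℕ := if b = A + 2 ∨ b = A + 3 ∨ A = b + 2 then 1 else 0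

namespace IsBlockSeq

theorem step_short (ha : IsBlockSeq a) (hℓ : ℓ ≤ 3) (hA : IsRounding A b) :
    ∃ ℓ' n, IsRounding (A + ℓ') (b + ℓ) ∧ AlignedPalCover a A ℓ' n ∧
      n + debt (b + ℓ) (A + ℓ') ≤ 1 + debt b A := by
  obtain ⟨⟨q, rfl⟩, hA⟩ := hA
  by_cases he : b + ℓ ≤ 4 * q + 3
  · refine ⟨0, 0, ⟨⟨q, rfl⟩, by omega⟩, .zero a _, ?_⟩
    unfold debt; split_ifs <;> omega
  · refine ⟨4, 1, ⟨⟨q + 1, by ring⟩, by omega⟩, .single (ha.palAt_block q) dvd_rfl, ?_⟩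
    unfold debt; split_ifs <;> omega

theorem step_even (ha : IsBlockSeq a) {h : ℕ} (hp : PalAt a b (2 * h)) (hh : 2 ≤ h)
    (hA : IsRounding A b) :
    ∃ ℓ' n, IsRounding (A + ℓ') (b + 2 * h) ∧ AlignedPalCover a A ℓ' n ∧
      n + debt (b + 2 * h) (A + ℓ') ≤ 1 + debt b A := by
  have hc := ha.two_dvd_center hp (by omega)
  obtain ⟨hA4, hA⟩ := hA
  -- moving `b` down by 3 is not possible; split off the block `[A, A + 4)` and shrink instead
  by_cases hb : b = A + 3
  · have hcore := ha.palAt_recenter hp hh (dvd_add hA4 dvd_rfl) (by omega) (by omega)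
    refine ⟨4 + 2 * (b + h - (A + 4)), 2, ⟨dvd_add hA4 (by omega), by omega⟩,
      (AlignedPalCover.single (?_ : PalAt a A 4) dvd_rfl).append (.single hcore (by omega)), ?_⟩
    · obtain ⟨q, rfl⟩ := hA4; exact ha.palAt_block q
    · unfold debt; split_ifs <;> omega
  · refine ⟨2 * (b + h - A), 1, ⟨dvd_add hA4 (by omega), by omega⟩,
      .single (ha.palAt_recenter hp hh hA4 (by omega) (by omega)) (by omega), ?_⟩
    unfold debt; split_ifs <;> omega

theorem step (ha : IsBlockSeq a) (hp : PalAt a b ℓ) (hA : IsRounding A b) :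
    ∃ ℓ' n, IsRounding (A + ℓ') (b + ℓ) ∧ AlignedPalCover a A ℓ' n ∧
      n + debt (b + ℓ) (A + ℓ') ≤ 1 + debt b A := by
  rcases le_or_gt ℓ 3 with hℓ | hℓ
  · exact ha.step_short hℓ hA
  obtain ⟨h, rfl | rfl⟩ := Nat.even_or_odd' ℓ
  · exact ha.step_even hp (by omega) hA
  · exact absurd hp (ha.not_palAt_odd (by omega))

theorem exists_alignedPalCover (ha : IsBlockSeq a) (ps : List (List α))
    (hps : ∀ p ∈ ps, p.Palindrome) {b L A : ℕ} (hflat : ps.flatten = factor a b L)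
    (hA : IsRounding A b) :
    ∃ ℓ' n, IsRounding (A + ℓ') (b + L) ∧ AlignedPalCover a A ℓ' n ∧
      n + debt (b + L) (A + ℓ') ≤ ps.length + debt b A := by
  induction ps generalizing b L A with
  | nil =>
    obtain rfl : L = 0 := by simpa [length_factor] using congrArg List.length hflat.symm
    exact ⟨0, 0, hA, .zero a A, le_rfl⟩
  | cons p ps ih =>
    obtain ⟨hp, hrest, rfl⟩ := eq_factor_of_append_eq_factor hflat
    have hpal := palindrome_factor_iff.mp (hp ▸ hps p (by simp))
    obtain ⟨ℓ₁, n₁, hA₁, hcov₁, hn₁⟩ := ha.step hpal hA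
    obtain ⟨ℓ₂, n₂, hA₂, hcov₂, hn₂⟩ :=
      ih (fun q hq => hps q (by simp [hq])) hrest hA₁
    refine ⟨ℓ₁ + ℓ₂, n₁ + n₂, by rwa [← add_assoc, ← add_assoc], hcov₁.append hcov₂, ?_⟩
    rw [← add_assoc, ← add_assoc, List.length_cons]
    omega

end IsBlockSeq

end

theorem stmt19 {α : Type*} (a : ℕ → α) (hC : InC a) (k : ℕ) :
    ∃ ps : List (List α),
      ps.flatten = prefixWord a (4 * k) ∧ ps.length = P a (4 * k) ∧
      ∀ p ∈ ps, p.Palindrome ∧ 4 ∣ p.length := by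
  obtain ⟨ps, hlen, hpal, hflat⟩ := exists_length_eq_palLen (prefixWord a (4 * k))
  obtain ⟨ℓ, n, hround, ⟨qs, hqflat, hqlen, hqs⟩, hn⟩ :=
    hC.isBlockSeq.exists_alignedPalCover ps hpal hflat (A := 0) ⟨dvd_zero 4, by omega, by omega⟩
  obtain rfl : ℓ = 4 * k := by unfold IsRounding at hround; omega
  have hdebt : debt (0 + 4 * k) (0 + 4 * k) = 0 ∧ debt 0 0 = 0 := by simp [debt]
  refine ⟨qs, hqflat, le_antisymm ?_ (palLen_le (fun p hp => (hqs p hp).1) hqflat), hqs⟩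
  rw [P, ← hlen]
  omega
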